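/- Let K be a non-archimedean local field, V a finite-dimensional K-vector space, and W ⊆ V a K-subspace. Then the canonical map from the set of norms on V to the product of the sets of norms on W and on V/W, sending a norm to (its restriction to W, its quotient norm on V/W), is Lipschitz continuous: there exists a constant C > 0 such that for all norms α, β on V one has d_2(α|_W, β|_W) ≤ C·d_2(α, β) and d_2(α̅, β̅) ≤ C·d_2(α, β), where α̅, β̅ denote the quotient norms on V/W. -/

import Mathlib

/-- A (non-archimedean) norm on a vector space `V` over a normed field `K`:
a function `f : V → ℝ≥0` with `f v = 0` iff `v = 0`, `f (a • v) = |a| * f v`,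
and the ultrametric inequality `f (v + w) ≤ max (f v) (f w)`. -/
structure IsVecNorm (K : Type*) [NormedField K] (V : Type*) [AddCommGroup V] [Module K V]
    (f : V → ℝ) : Prop where
  nonneg : ∀ v, 0 ≤ f v
  eq_zero_iff : ∀ v, f v = 0 ↔ v = 0
  smul_eq : ∀ (a : K) (v : V), f (a • v) = ‖a‖ * f v
  add_le_max : ∀ v w, f (v + w) ≤ max (f v) (f w)

/-- The `i`-th term `λ_i(f, f')` of the relative spectrum of the norm `f'` with respect to
the norm `f`: the sup over subspaces `W ⊆ V` with `dim W ≥ i` of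
`inf_{w ∈ W∖{0}} log (f' w / f w)`. -/
noncomputable def relativeSpectrum (K : Type*) [NormedField K] (V : Type*) [AddCommGroup V]
    [Module K V] (f f' : V → ℝ) (i : ℕ) : ℝ :=
  ⨆ W : {W : Submodule K V // i ≤ Module.finrank K W},
    ⨅ w : {w : V // w ∈ W.1 ∧ w ≠ 0}, Real.log (f' w.1 / f w.1)

/-- The Bruhat–Tits distance between two norms on a finite-dimensional vector space:
`d₂(f, f') = (∑_{i=1}^N λ_i(f, f')²)^{1/2}` where `N = dim V`. -/
noncomputable def btDist (K : Type*) [NormedField K] (V : Type*) [AddCommGroup V]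
    [Module K V] (f f' : V → ℝ) : ℝ :=
  Real.sqrt (∑ i ∈ Finset.Icc 1 (Module.finrank K V), (relativeSpectrum K V f f' i) ^ 2)

/-- The quotient norm on `V ⧸ W` induced by a norm `f` on `V`:
`‖x + W‖ = inf_{y ∈ x + W} f y`. -/
noncomputable def quotientNorm (K : Type*) [NormedField K] {V : Type*} [AddCommGroup V]
    [Module K V] (W : Submodule K V) (f : V → ℝ) (x : V ⧸ W) : ℝ :=
  ⨅ y : {y : V // (Submodule.Quotient.mk y : V ⧸ W) = x}, f y.1

/-! For norms `α, β` on `V` with `N = dim V`, every `v ≠ 0` satisfies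
`λ_N ≤ log (β v / α v) ≤ λ_1`, because `λ_N` is the infimum of the ratios over all of `V` and
`λ_1` dominates the (constant) ratio on each line; the infima and suprema involved are finite
because norms on a finite-dimensional space over a complete field are equivalent. These pointwise bounds pass to the restrictions to `W` and, through the infimum,
to the quotient norms (positive since `W` is closed). Pointwise bounds `a ≤ log (g' u / g u) ≤ b`
confine every term of a relative spectrum to `[a, b]`, so each of the at most `N` squared terms
on `W` or `V ⧸ W` is at most `max (λ_1², λ_N²) ≤ d₂(α, β)²`, which gives the constant `√N`. -/

open Real Set Module

theorem ciInf_mem_Icc {ι α : Type*} [Nonempty ι] [ConditionallyCompleteLattice α] {f : ι → α}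
    {a b : α} (h : ∀ i, f i ∈ Icc a b) : ⨅ i, f i ∈ Icc a b :=
  ⟨le_ciInf fun i => (h i).1,
    (ciInf_le ⟨a, forall_mem_range.2 fun i => (h i).1⟩ (Classical.arbitrary ι)).trans (h _).2⟩

theorem ciSup_mem_Icc {ι α : Type*} [Nonempty ι] [ConditionallyCompleteLattice α] {f : ι → α}
    {a b : α} (h : ∀ i, f i ∈ Icc a b) : ⨆ i, f i ∈ Icc a b :=
  ⟨(h _).1.trans (le_ciSup ⟨b, forall_mem_range.2 fun i => (h i).2⟩ (Classical.arbitrary ι)),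
    ciSup_le fun i => (h i).2⟩

theorem Real.log_div_mem_Icc_iff {x y a b : ℝ} (hx : 0 < x) (hy : 0 < y) :
    log (y / x) ∈ Icc a b ↔ exp a * x ≤ y ∧ y ≤ exp b * x := by
  rw [mem_Icc, le_log_iff_exp_le (div_pos hy hx), log_le_iff_le_exp (div_pos hy hx),
    le_div_iff₀ hx, div_le_iff₀ hx]

namespace IsVecNorm

variable {K V : Type*} [NormedField K] [AddCommGroup V] [Module K V] {f α β : V → ℝ}

theorem pos (hf : IsVecNorm K V f) {v : V} (hv : v ≠ 0) : 0 < f v :=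
  (hf.nonneg v).lt_of_ne' fun h => hv ((hf.eq_zero_iff v).mp h)

theorem map_zero (hf : IsVecNorm K V f) : f 0 = 0 :=
  (hf.eq_zero_iff 0).mpr rfl

theorem div_smul (hα : IsVecNorm K V α) (hβ : IsVecNorm K V β) {a : K} (ha : a ≠ 0) (v : V) :
    β (a • v) / α (a • v) = β v / α v := by
  rw [hα.smul_eq, hβ.smul_eq, mul_div_mul_left _ _ (norm_ne_zero_iff.mpr ha)]

/-- `V` as a normed space for the norm `f`; indexing the synonym by the proof `hf` lets the
instances below be global. -/
def Space (_hf : IsVecNorm K V f) : Type _ := V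

variable (hf : IsVecNorm K V f)

instance : AddCommGroup hf.Space := ‹AddCommGroup V›

instance : Module K hf.Space := ‹Module K V›

noncomputable instance : NormedAddCommGroup hf.Space :=
  AddGroupNorm.toNormedAddCommGroup
    { toFun := f
      map_zero' := hf.map_zero
      add_le' := fun v w => (hf.add_le_max v w).trans
        (max_le (le_add_of_nonneg_right (hf.nonneg w)) (le_add_of_nonneg_left (hf.nonneg v)))
      neg' := fun (v : V) => by
        have h := hf.smul_eq (-1 : K) v
        rwa [neg_one_smul, norm_neg, norm_one, one_mul] at h
      eq_zero_of_map_eq_zero' := fun v => (hf.eq_zero_iff v).mp }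

instance : NormedSpace K hf.Space := ⟨fun a v => (hf.smul_eq a v).le⟩

instance [FiniteDimensional K V] : FiniteDimensional K hf.Space := ‹FiniteDimensional K V›

end IsVecNorm

section Quotient

variable {K V : Type*} [NormedField K] [AddCommGroup V] [Module K V] (W : Submodule K V)
  {f g : V → ℝ}

theorem quotientNorm_mono (hf : ∀ v, 0 ≤ f v) (hfg : ∀ v, f v ≤ g v) (x : V ⧸ W) :
    quotientNorm K W f x ≤ quotientNorm K W g x :=
  ciInf_mono ⟨0, forall_mem_range.2 fun y => hf y.1⟩ fun y => hfg y.1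

theorem quotientNorm_const_mul {c : ℝ} (hc : 0 ≤ c) (f : V → ℝ) (x : V ⧸ W) :
    quotientNorm K W (fun v => c * f v) x = c * quotientNorm K W f x :=
  (Real.mul_iInf_of_nonneg hc _).symm

end Quotient

section Spectrum

variable {K U : Type*} [NormedField K] [AddCommGroup U] [Module K U] {g g' : U → ℝ} {a b : ℝ}

theorem iInf_log_div_mem_Icc {W : Submodule K U} (hW : 1 ≤ finrank K W)
    (h : ∀ u, u ≠ 0 → log (g' u / g u) ∈ Icc a b) :
    ⨅ w : {w : U // w ∈ W ∧ w ≠ 0}, log (g' w.1 / g w.1) ∈ Icc a b := by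
  have hW' : W ≠ ⊥ := by
    rintro rfl
    simp at hW
  obtain ⟨w, hw, hw0⟩ := Submodule.exists_mem_ne_zero_of_ne_bot hW'
  have : Nonempty {w : U // w ∈ W ∧ w ≠ 0} := ⟨⟨w, hw, hw0⟩⟩
  exact ciInf_mem_Icc fun w => h w.1 w.2.2

theorem relativeSpectrum_mem_Icc (h : ∀ u, u ≠ 0 → log (g' u / g u) ∈ Icc a b) {i : ℕ}
    (hi : 1 ≤ i) (hiU : i ≤ finrank K U) : relativeSpectrum K U g g' i ∈ Icc a b := by
  have : Nonempty {W : Submodule K U // i ≤ finrank K W} := ⟨⟨⊤, by rwa [finrank_top]⟩⟩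
  exact ciSup_mem_Icc fun W => iInf_log_div_mem_Icc (hi.trans W.2) h

theorem relativeSpectrum_finrank_le_log_div [FiniteDimensional K U]
    (h : ∀ u, u ≠ 0 → a ≤ log (g' u / g u)) {u : U} (hu : u ≠ 0) :
    relativeSpectrum K U g g' (finrank K U) ≤ log (g' u / g u) := by
  have : Nonempty {W : Submodule K U // finrank K U ≤ finrank K W} :=
    ⟨⟨⊤, finrank_top K U |>.ge⟩⟩
  refine ciSup_le fun ⟨W, hW⟩ => ?_
  have huW : u ∈ W :=
    Submodule.eq_top_of_finrank_eq (le_antisymm W.finrank_le hW) ▸ Submodule.mem_top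
  exact ciInf_le ⟨a, forall_mem_range.2 fun w : {w : U // w ∈ W ∧ w ≠ 0} => h _ w.2.2⟩
    ⟨u, huW, hu⟩

theorem IsVecNorm.log_div_le_relativeSpectrum_one {α β : U → ℝ} (hα : IsVecNorm K U α)
    (hβ : IsVecNorm K U β) (h : ∀ u, u ≠ 0 → log (β u / α u) ∈ Icc a b) {u : U} (hu : u ≠ 0) :
    log (β u / α u) ≤ relativeSpectrum K U α β 1 := by
  have hline : log (β u / α u) ≤
      ⨅ w : {w : U // w ∈ K ∙ u ∧ w ≠ 0}, log (β w.1 / α w.1) := by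
    have : Nonempty {w : U // w ∈ K ∙ u ∧ w ≠ 0} := ⟨⟨u, Submodule.mem_span_singleton_self u, hu⟩⟩
    refine le_ciInf fun ⟨w, hw, hw0⟩ => ?_
    obtain ⟨c, rfl⟩ := Submodule.mem_span_singleton.mp hw
    rw [hα.div_smul hβ (left_ne_zero_of_smul hw0)]
  have hbdd : BddAbove (range fun W : {W : Submodule K U // 1 ≤ finrank K W} =>
      ⨅ w : {w : U // w ∈ W.1 ∧ w ≠ 0}, log (β w.1 / α w.1)) :=
    ⟨b, forall_mem_range.2 fun W => (iInf_log_div_mem_Icc W.2 h).2⟩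
  exact hline.trans (le_ciSup hbdd ⟨K ∙ u, (finrank_span_singleton hu).ge⟩)

end Spectrum

section CompleteField

variable {K V : Type*} [NontriviallyNormedField K] [CompleteSpace K] [AddCommGroup V] [Module K V]
  {f α β : V → ℝ}

theorem IsVecNorm.exists_le_mul [FiniteDimensional K V] (hα : IsVecNorm K V α)
    (hβ : IsVecNorm K V β) : ∃ C, 0 < C ∧ ∀ v, β v ≤ C * α v :=
  let id' : hα.Space →ₗ[K] hβ.Space := LinearMap.id
  SemilinearMapClass.bound_of_continuous id' id'.continuous_of_finiteDimensional

theorem IsVecNorm.exists_log_div_mem_Icc [FiniteDimensional K V] (hα : IsVecNorm K V α)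
    (hβ : IsVecNorm K V β) : ∃ a b : ℝ, ∀ v, v ≠ 0 → log (β v / α v) ∈ Icc a b := by
  obtain ⟨C₁, hC₁, hβα⟩ := hα.exists_le_mul hβ
  obtain ⟨C₂, hC₂, hαβ⟩ := hβ.exists_le_mul hα
  refine ⟨-log C₂, log C₁, fun v hv => (log_div_mem_Icc_iff (hα.pos hv) (hβ.pos hv)).mpr ⟨?_, ?_⟩⟩
  · rw [exp_neg, exp_log hC₂, inv_mul_le_iff₀ hC₂]
    exact hαβ v
  · rw [exp_log hC₁]
    exact hβα v

theorem IsVecNorm.log_div_mem_Icc_relativeSpectrum [FiniteDimensional K V]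
    (hα : IsVecNorm K V α) (hβ : IsVecNorm K V β) {v : V} (hv : v ≠ 0) :
    log (β v / α v) ∈
      Icc (relativeSpectrum K V α β (finrank K V)) (relativeSpectrum K V α β 1) := by
  obtain ⟨a, b, h⟩ := hα.exists_log_div_mem_Icc hβ
  exact ⟨relativeSpectrum_finrank_le_log_div (fun u hu => (h u hu).1) hv,
    hα.log_div_le_relativeSpectrum_one hβ h hv⟩

theorem quotientNorm_pos (W : Submodule K V) [FiniteDimensional K W] (hf : IsVecNorm K V f)
    {x : V ⧸ W} (hx : x ≠ 0) : 0 < quotientNorm K W f x := by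
  obtain ⟨y₀, rfl⟩ := Submodule.Quotient.mk_surjective W x
  let W' : Submodule K hf.Space := W
  have : FiniteDimensional K W' := ‹FiniteDimensional K W›
  have hy₀ : (y₀ : hf.Space) ∈ (W' : Set hf.Space)ᶜ := fun h =>
    hx ((Submodule.Quotient.mk_eq_zero W).mpr h)
  obtain ⟨ε, hε, hball⟩ :=
    Metric.isOpen_iff.mp W'.closed_of_finiteDimensional.isOpen_compl _ hy₀
  have : Nonempty {y : V // (Submodule.Quotient.mk y : V ⧸ W) = Submodule.Quotient.mk y₀} :=
    ⟨⟨y₀, rfl⟩⟩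
  -- every representative `y` of `y₀ + W` has `f y = dist (y₀ - y) y₀` with `y₀ - y ∈ W`
  refine hε.trans_le (le_ciInf fun ⟨y, hy⟩ => not_lt.mp fun hlt => ?_)
  have hdist : dist (α := hf.Space) (y₀ - y) y₀ < ε := by
    change f (-(y₀ - y) + y₀) < ε
    rwa [neg_sub, sub_add_cancel]
  exact hball (Metric.mem_ball.mpr hdist) ((Submodule.Quotient.eq W).mp hy.symm)

theorem quotientNorm_log_div_mem_Icc (W : Submodule K V) [FiniteDimensional K W]
    (hα : IsVecNorm K V α) (hβ : IsVecNorm K V β) {a b : ℝ}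
    (h : ∀ v, v ≠ 0 → log (β v / α v) ∈ Icc a b) {x : V ⧸ W} (hx : x ≠ 0) :
    log (quotientNorm K W β x / quotientNorm K W α x) ∈ Icc a b := by
  have hbounds : ∀ v, exp a * α v ≤ β v ∧ β v ≤ exp b * α v := by
    intro v
    rcases eq_or_ne v 0 with rfl | hv
    · simp [hα.map_zero, hβ.map_zero]
    · exact (log_div_mem_Icc_iff (hα.pos hv) (hβ.pos hv)).mp (h v hv)
  have hqα := quotientNorm_pos W hα hx
  have hlo : exp a * quotientNorm K W α x ≤ quotientNorm K W β x := by
    rw [← quotientNorm_const_mul W (exp_pos a).le]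
    exact quotientNorm_mono W (fun v => mul_nonneg (exp_pos a).le (hα.nonneg v))
      (fun v => (hbounds v).1) x
  have hhi : quotientNorm K W β x ≤ exp b * quotientNorm K W α x := by
    rw [← quotientNorm_const_mul W (exp_pos b).le]
    exact quotientNorm_mono W hβ.nonneg (fun v => (hbounds v).2) x
  exact (log_div_mem_Icc_iff hqα ((mul_pos (exp_pos a) hqα).trans_le hlo)).mpr ⟨hlo, hhi⟩

end CompleteField

theorem btDist_le_of_log_div_mem_Icc {K V U : Type*} [NormedField K] [AddCommGroup V]
    [Module K V] [AddCommGroup U] [Module K U] {α β : V → ℝ} {g g' : U → ℝ}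
    (hUV : finrank K U ≤ finrank K V)
    (h : ∀ u, u ≠ 0 → log (g' u / g u) ∈
      Icc (relativeSpectrum K V α β (finrank K V)) (relativeSpectrum K V α β 1)) :
    btDist K U g g' ≤ √(finrank K V) * btDist K V α β := by
  set S := ∑ i ∈ Finset.Icc 1 (finrank K V), relativeSpectrum K V α β i ^ 2
  have hterm : ∀ i ∈ Finset.Icc 1 (finrank K U), relativeSpectrum K U g g' i ^ 2 ≤ S := by
    intro i hi
    rw [Finset.mem_Icc] at hi
    have hN : 1 ≤ finrank K V := hi.1.trans (hi.2.trans hUV)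
    have hsq : ∀ j ∈ Finset.Icc 1 (finrank K V), relativeSpectrum K V α β j ^ 2 ≤ S :=
      fun j hj => Finset.single_le_sum (fun _ _ => sq_nonneg _) hj
    obtain ⟨hlo, hhi⟩ := relativeSpectrum_mem_Icc h hi.1 hi.2
    rcases le_total 0 (relativeSpectrum K U g g' i) with h0 | h0
    · exact (pow_le_pow_left₀ h0 hhi 2).trans (hsq 1 (Finset.mem_Icc.2 ⟨le_rfl, hN⟩))
    · refine le_trans ?_ (hsq _ (Finset.mem_Icc.2 ⟨hN, le_rfl⟩))
      nlinarith
  calc btDist K U g g' ≤ √(finrank K U * S) := by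
        refine sqrt_le_sqrt ((Finset.sum_le_card_nsmul _ _ _ hterm).trans_eq ?_)
        simp
    _ ≤ √(finrank K V * S) := by gcongr
    _ = √(finrank K V) * btDist K V α β := sqrt_mul (Nat.cast_nonneg _) S

theorem restriction_quotient_lipschitz_general
    (K : Type*) [NontriviallyNormedField K] [LocallyCompactSpace K]
    (V : Type*) [AddCommGroup V] [Module K V] [FiniteDimensional K V]
    (W : Submodule K V) :
    ∃ C : ℝ, 0 < C ∧ ∀ (α β : V → ℝ), IsVecNorm K V α → IsVecNorm K V β →
      btDist K ↥W (fun w => α (w : V)) (fun w => β (w : V)) ≤ C * btDist K V α β ∧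
      btDist K (V ⧸ W) (quotientNorm K W α) (quotientNorm K W β) ≤ C * btDist K V α β := by
  have : ProperSpace K := .of_nontriviallyNormedField_of_weaklyLocallyCompactSpace K
  refine ⟨√(finrank K V) + 1, by positivity, fun α β hα hβ => ?_⟩
  have hC : √(finrank K V) * btDist K V α β ≤ (√(finrank K V) + 1) * btDist K V α β := by
    gcongr
    · exact sqrt_nonneg _
    · linarith
  have hV := fun v (hv : v ≠ 0) => hα.log_div_mem_Icc_relativeSpectrum hβ hv
  constructor
  · refine (btDist_le_of_log_div_mem_Icc W.finrank_le fun u hu => ?_).trans hC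
    exact hV u (by simpa using hu)
  · refine (btDist_le_of_log_div_mem_Icc W.finrank_quotient_le fun x hx => ?_).trans hC
    exact quotientNorm_log_div_mem_Icc W hα hβ hV hx

/-- Let `K` be a non-archimedean local field, `V` a finite-dimensional
`K`-vector space and `W ⊆ V` a subspace. The map sending a norm on `V` to (its restriction
to `W`, its quotient norm on `V ⧸ W`) is Lipschitz continuous for the Bruhat–Tits
distances. -/
theorem restriction_quotient_lipschitz
    (K : Type*) [NontriviallyNormedField K] [IsUltrametricDist K] [LocallyCompactSpace K]
    (V : Type*) [AddCommGroup V] [Module K V] [FiniteDimensional K V]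
    (W : Submodule K V) :
    ∃ C : ℝ, 0 < C ∧ ∀ (α β : V → ℝ), IsVecNorm K V α → IsVecNorm K V β →
      btDist K ↥W (fun w => α (w : V)) (fun w => β (w : V)) ≤ C * btDist K V α β ∧
      btDist K (V ⧸ W) (quotientNorm K W α) (quotientNorm K W β) ≤ C * btDist K V α β :=
  restriction_quotient_lipschitz_general K V W
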